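/- arXiv:2201.05485 — 3 statements merged into one kernel-verified Lean document; each statement's English description precedes it below -/
import Mathlib

section
/- Let P(x) = Σ_{r=0}^n a_r x^r be a real polynomial with nonnegative coefficients a_r ≥ 0 such that a_r > 0 for at least one r ≥ 1. Then the function Q(x) = P(x)/(x P'(x)) is monotone nonincreasing on (0,∞). -/
open Polynomial Finset

-- x * P'(x) = ∑ i in range (natDegree+1), i * coeff i * x^i
lemma aux_xderiv (P : Polynomial ℝ) (x : ℝ) :
    x * (derivative P).eval x
      = ∑ i ∈ range (P.natDegree + 1), (i : ℝ) * P.coeff i * x ^ i := by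
  have hd : (derivative P).natDegree < P.natDegree + 1 :=
    lt_of_le_of_lt ((natDegree_derivative_le P).trans tsub_le_self) (Nat.lt_succ_self _)
  rw [eval_eq_sum_range' hd]
  rw [Finset.mul_sum]
  have h1 : ∀ i, x * ((derivative P).coeff i * x ^ i)
      = ((i:ℝ)+1) * P.coeff (i+1) * x ^ (i+1) := by
    intro i
    rw [coeff_derivative]
    push_cast
    ring
  simp_rw [h1]
  have := Finset.sum_range_succ' (fun i => (i:ℝ) * P.coeff i * x ^ i) (P.natDegree + 1)
  have htop : ((P.natDegree + 1 : ℕ) : ℝ) * P.coeff (P.natDegree + 1) * x ^ (P.natDegree+1) = 0 := by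
    rw [coeff_eq_zero_of_natDegree_lt (Nat.lt_succ_self _)]; ring
  have h2 := Finset.sum_range_succ (fun i => (i:ℝ) * P.coeff i * x ^ i) (P.natDegree + 1)
  rw [h2, htop, add_zero] at this
  rw [this]
  simp [add_comm]

lemma aux_term (a b x y : ℝ) (ha : 0 ≤ a) (hb : 0 ≤ b) (hx : 0 ≤ x) (hxy : x ≤ y)
    (r s : ℕ) :
    0 ≤ a * b * (((s:ℝ) - r) * (x ^ r * y ^ s - y ^ r * x ^ s)) := by
  have hy : 0 ≤ y := hx.trans hxy
  rcases le_total r s with h | h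
  · obtain ⟨k, rfl⟩ := Nat.exists_eq_add_of_le h
    have h1 : (((r+k:ℕ):ℝ) - r) = (k:ℝ) := by push_cast; ring
    have h2 : x ^ r * y ^ (r+k) - y ^ r * x ^ (r+k)
        = x ^ r * y ^ r * (y ^ k - x ^ k) := by rw [pow_add, pow_add]; ring
    rw [h1, h2]
    have h4 : 0 ≤ y ^ k - x ^ k := sub_nonneg.mpr (pow_le_pow_left₀ hx hxy k)
    exact mul_nonneg (mul_nonneg ha hb) (mul_nonneg (Nat.cast_nonneg k)
      (mul_nonneg (mul_nonneg (pow_nonneg hx r) (pow_nonneg hy r)) h4))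
  · obtain ⟨k, rfl⟩ := Nat.exists_eq_add_of_le h
    have h1 : ((s:ℝ) - ((s+k:ℕ):ℝ)) = -(k:ℝ) := by push_cast; ring
    have h2 : x ^ (s+k) * y ^ s - y ^ (s+k) * x ^ s
        = -(x ^ s * y ^ s * (y ^ k - x ^ k)) := by rw [pow_add, pow_add]; ring
    rw [h1, h2, neg_mul_neg]
    have h4 : 0 ≤ y ^ k - x ^ k := sub_nonneg.mpr (pow_le_pow_left₀ hx hxy k)
    exact mul_nonneg (mul_nonneg ha hb) (mul_nonneg (Nat.cast_nonneg k)
      (mul_nonneg (mul_nonneg (pow_nonneg hx s) (pow_nonneg hy s)) h4))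

/-- Let `P(x) = Σ_{r=0}^n a_r x^r` be a real polynomial with
nonnegative coefficients such that `a_r > 0` for at least one `r ≥ 1`. Then
`Q(x) = P(x)/(x P'(x))` is monotone nonincreasing on `(0,∞)`. -/
theorem stmt12 (P : Polynomial ℝ) (hnonneg : ∀ i : ℕ, 0 ≤ P.coeff i)
    (hpos : ∃ i : ℕ, 1 ≤ i ∧ 0 < P.coeff i) :
    AntitoneOn (fun x : ℝ => P.eval x / (x * (Polynomial.derivative P).eval x))
      (Set.Ioi (0:ℝ)) := by
  obtain ⟨i₀, hi₀, hc₀⟩ := hpos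
  have hi₀n : i₀ ∈ range (P.natDegree+1) := by
    simp only [Finset.mem_range, Nat.lt_succ_iff]
    exact le_natDegree_of_ne_zero hc₀.ne'
  -- positivity of x * P'(x) for x > 0
  have hden : ∀ x : ℝ, 0 < x → 0 < x * (derivative P).eval x := by
    intro x hx
    rw [aux_xderiv]
    have h1 : (0:ℝ) < (i₀:ℝ) * P.coeff i₀ * x ^ i₀ := by
      have : (0:ℝ) < (i₀:ℝ) := by exact_mod_cast hi₀
      positivity
    refine lt_of_lt_of_le h1 (Finset.single_le_sum (f := fun j : ℕ => (j:ℝ) * P.coeff j * x ^ j) ?_ hi₀n)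
    intro i _
    have := hnonneg i
    positivity
  intro x hx y hy hxy
  simp only [Set.mem_Ioi] at hx hy
  simp only
  rw [div_le_div_iff₀ (hden y hy) (hden x hx)]
  -- expand everything
  rw [aux_xderiv, aux_xderiv, eval_eq_sum_range (p := P), eval_eq_sum_range (p := P)]
  rw [Finset.sum_mul_sum, Finset.sum_mul_sum]
  rw [← sub_nonneg, ← Finset.sum_sub_distrib]
  simp_rw [← Finset.sum_sub_distrib]
  set g : ℕ → ℕ → ℝ := fun r s =>
    P.coeff r * x ^ r * ((s:ℝ) * P.coeff s * y ^ s) - P.coeff r * y ^ r * ((s:ℝ) * P.coeff s * x ^ s)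
    with hg
  have key : 0 ≤ ∑ r ∈ range (P.natDegree+1), ∑ s ∈ range (P.natDegree+1), g r s := by
    have h2 : (2:ℝ) * (∑ r ∈ range (P.natDegree+1), ∑ s ∈ range (P.natDegree+1), g r s)
        = ∑ r ∈ range (P.natDegree+1), ∑ s ∈ range (P.natDegree+1), (g r s + g s r) := by
      rw [two_mul]
      nth_rewrite 2 [Finset.sum_comm]
      rw [← Finset.sum_add_distrib]
      simp_rw [← Finset.sum_add_distrib]
    have h3 : 0 ≤ ∑ r ∈ range (P.natDegree+1), ∑ s ∈ range (P.natDegree+1), (g r s + g s r) := by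
      refine Finset.sum_nonneg fun r _ => Finset.sum_nonneg fun s _ => ?_
      have heq : g r s + g s r
          = P.coeff r * P.coeff s * (((s:ℝ) - r) * (x ^ r * y ^ s - y ^ r * x ^ s)) := by
        simp only [hg]; ring
      rw [heq]
      exact aux_term _ _ _ _ (hnonneg r) (hnonneg s) hx.le hxy r s
    linarith [h2 ▸ h3]
  exact key
end

section
/- Fix q > 0, an integer n ≥ 1, 0 < λ < n, and an integer r with 1 ≤ r ≤ n. Then Z_{n,λ,q}[B_r] ≤ Z_{n,λ,q}[L] · (1 − λ/n)^{−rn/2}. -/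
open Filter Topology Set

noncomputable section

/-- Size of the connected component of `K_n(ω)` containing the vertex `v`. -/
def compSize {n : ℕ} (G : SimpleGraph (Fin n)) (v : Fin n) : ℕ :=
  (G.connectedComponentMk v).supp.ncard

/-- Random cluster weight of a configuration `G` on the complete graph `K_m`,
with edge weight `p` and cluster weight `q`. -/
def rcW (m : ℕ) (p q : ℝ) (G : SimpleGraph (Fin m)) : ℝ :=
  p ^ G.edgeSet.ncard * (1 - p) ^ (m * (m - 1) / 2 - G.edgeSet.ncard) *
    q ^ Nat.card G.ConnectedComponent

/-- Total random-cluster weight of an event, with explicit edge weight `p`. -/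
def ZP (m : ℕ) (p q : ℝ) (A : Set (SimpleGraph (Fin m))) : ℝ :=
  ∑ᶠ G ∈ A, rcW m p q G

/-- `Z_{n,λ,q}[A]`, i.e. the total weight of the event `A` with `p = λ/n`. -/
def Zrc (n : ℕ) (lam q : ℝ) (A : Set (SimpleGraph (Fin n))) : ℝ :=
  ZP n (lam / n) q A

/-- The partition function `Z_{n,λ,q}`. -/
def Ztot (n : ℕ) (lam q : ℝ) : ℝ := Zrc n lam q Set.univ

/-- The random cluster probability `φ_{n,λ,q}[A]`. -/
def phiRC (n : ℕ) (lam q : ℝ) (A : Set (SimpleGraph (Fin n))) : ℝ :=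
  Zrc n lam q A / Ztot n lam q

/-- The event `K` that the configuration is connected. -/
def Kev (n : ℕ) : Set (SimpleGraph (Fin n)) := {G | G.Connected}

/-- The event `B_r` that no connected component has size larger than `r`. -/
def Bev (n : ℕ) (r : ℝ) : Set (SimpleGraph (Fin n)) :=
  {G | ∀ v, (compSize G v : ℝ) ≤ r}

/-- The event `L` that the configuration is acyclic. -/
def Lev (n : ℕ) : Set (SimpleGraph (Fin n)) := {G | G.IsAcyclic}

/-- The set `V_r` of vertices lying in components of size larger than `r`. -/
def Vbig {n : ℕ} (G : SimpleGraph (Fin n)) (r : ℝ) : Set (Fin n) :=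
  {v | r < (compSize G v : ℝ)}

/-- The number `N_r` of connected components of size larger than `r`. -/
def Nbig {n : ℕ} (G : SimpleGraph (Fin n)) (r : ℝ) : ℕ :=
  {C : G.ConnectedComponent | r < (C.supp.ncard : ℝ)}.ncard

def pi1 (x : ℝ) : ℝ := 1 - Real.exp (-x)

def Psi (x : ℝ) : ℝ := min (Real.log x - (x - 1/x) / 2) 0

def Sent (θ : ℝ) : ℝ := θ * Real.log θ + (1 - θ) * Real.log (1 - θ)

def Phi (θ lam q : ℝ) : ℝ :=
  -Sent θ + (1 - θ) * Real.log (1 - pi1 (lam * θ)) + θ * Real.log (pi1 (lam * θ)) +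
    (1 - θ) * (Psi (lam * (1 - θ) / q) - ((q - 1) / (2 * q)) * (lam * (1 - θ)) + Real.log q)

/-!
Every configuration `ω` is sandwiched between a spanning forest `F` of `ω` and the graph
`F.componentCliques` that turns each component of `F` into a clique; every graph in this
interval has the components of `F`. The weights of the interval add up to
`w(F) (1 - p)^{-(|F.componentCliques| - |F|)}`, and if the components have at most `r` vertices,
`F.componentCliques` has maximum degree at most `r`, hence at most `rn/2` edges.
Grouping `B_r` according to a chosen spanning forest, which lies in `L`, gives the bound.
-/

open scoped Finset

namespace SimpleGraph

variable {V : Type*}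

def componentCliques (G : SimpleGraph V) : SimpleGraph V := fromRel G.Reachable

@[simp] lemma componentCliques_adj {G : SimpleGraph V} {a b : V} :
    G.componentCliques.Adj a b ↔ a ≠ b ∧ G.Reachable a b := by
  simp [componentCliques, reachable_comm (u := b)]

lemma le_componentCliques (G : SimpleGraph V) : G ≤ G.componentCliques :=
  fun _ _ h => componentCliques_adj.mpr ⟨h.ne, h.reachable⟩

lemma componentCliques_congr {G H : SimpleGraph V} (h : G.Reachable = H.Reachable) :
    G.componentCliques = H.componentCliques := by
  rw [componentCliques, h, componentCliques]

@[simp] lemma reachable_componentCliques (G : SimpleGraph V) :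
    G.componentCliques.Reachable = G.Reachable := by
  ext a b
  refine ⟨fun h => ?_, fun h => h.mono G.le_componentCliques⟩
  rw [reachable_iff_reflTransGen] at h ⊢
  exact h.lift' id fun x y hxy =>
    (reachable_iff_reflTransGen x y).mp (componentCliques_adj.mp hxy).2

lemma reachable_eq_of_le_of_le_componentCliques {F G : SimpleGraph V} (hFG : F ≤ G)
    (hG : G ≤ F.componentCliques) : G.Reachable = F.Reachable := by
  refine le_antisymm (fun a b h => ?_) (fun a b h => h.mono hFG)
  simpa using h.mono hG

lemma ncard_edgeSet (G : SimpleGraph V) [Fintype G.edgeSet] :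
    G.edgeSet.ncard = #G.edgeFinset := by
  rw [← coe_edgeFinset, Set.ncard_coe_finset]

lemma two_mul_ncard_edgeSet_componentCliques_le [Fintype V] {G : SimpleGraph V} {r : ℕ}
    (h : ∀ v, (G.connectedComponentMk v).supp.ncard ≤ r) :
    2 * G.componentCliques.edgeSet.ncard ≤ Fintype.card V * r := by
  classical
  have hdeg (v : V) : G.componentCliques.degree v ≤ r := by
    rw [← card_neighborSet_eq_degree, ← Nat.card_eq_fintype_card, Nat.card_coe_set_eq]
    refine (Set.ncard_le_ncard fun u hu => ?_).trans (h v)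
    simpa [ConnectedComponent.eq, reachable_comm] using (componentCliques_adj.mp hu).2
  calc 2 * G.componentCliques.edgeSet.ncard
      = ∑ v, G.componentCliques.degree v := by
        rw [sum_degrees_eq_twice_card_edges, ncard_edgeSet]
    _ ≤ ∑ _v : V, r := Finset.sum_le_sum fun v _ => hdeg v
    _ = Fintype.card V * r := by simp

open Classical in
lemma sum_pow_mul_pow_interval_eq_one [Fintype V] [DecidableEq V] {F H : SimpleGraph V}
    (hFH : F ≤ H) (p : ℝ) :
    ∑ G ∈ {G | F ≤ G ∧ G ≤ H}, p ^ (G.edgeSet.ncard - F.edgeSet.ncard) *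
      (1 - p) ^ (H.edgeSet.ncard - G.edgeSet.ncard) = 1 := by
  set D := H.edgeFinset \ F.edgeFinset
  calc _ = ∑ S ∈ D.powerset, p ^ #S * (1 - p) ^ (#D - #S) := by
        refine Finset.sum_nbij' (fun G => G.edgeFinset \ F.edgeFinset)
          (fun S => fromEdgeSet (F.edgeSet ∪ S)) ?_ ?_ ?_ ?_ ?_
        · intro G hG
          simp only [Finset.mem_filter, Finset.mem_univ, true_and] at hG
          simpa [D] using Finset.sdiff_subset_sdiff (edgeFinset_mono hG.2) subset_rfl
        · intro S hS
          simp only [Finset.mem_powerset, Finset.subset_sdiff, D] at hS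
          have hSH : (S : Set (Sym2 V)) ⊆ H.edgeSet := by simpa using Finset.coe_subset.mpr hS.1
          simp only [Finset.mem_filter, Finset.mem_univ, true_and, le_fromEdgeSet_iff,
            fromEdgeSet_le]
          exact ⟨Set.subset_union_left,
            Set.sdiff_subset.trans (Set.union_subset (edgeSet_mono hFH) hSH)⟩
        · intro G hG
          simp only [Finset.mem_filter, Finset.mem_univ, true_and] at hG
          rw [Finset.coe_sdiff, coe_edgeFinset, coe_edgeFinset, Set.union_sdiff_self,
            Set.union_eq_right.mpr (edgeSet_mono hG.1), fromEdgeSet_edgeSet]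
        · intro S hS
          simp only [Finset.mem_powerset, Finset.subset_sdiff, D] at hS
          have hSH : (S : Set (Sym2 V)) ⊆ H.edgeSet := by simpa using Finset.coe_subset.mpr hS.1
          have hSF : Disjoint (S : Set (Sym2 V)) F.edgeSet := by
            simpa using Finset.disjoint_coe.mpr hS.2
          apply Finset.coe_injective
          rw [Finset.coe_sdiff, coe_edgeFinset, coe_edgeFinset, edgeSet_fromEdgeSet]
          ext e
          constructor
          · rintro ⟨⟨he | he, -⟩, heF⟩
            exacts [absurd he heF, he]
          · exact fun he => ⟨⟨Or.inr he, not_isDiag_of_mem_edgeSet H (hSH he)⟩,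
              hSF.notMem_of_mem_left he⟩
        · intro G hG
          simp only [Finset.mem_filter, Finset.mem_univ, true_and] at hG
          have hFG := Finset.card_le_card (edgeFinset_mono hG.1)
          have hGH := Finset.card_le_card (edgeFinset_mono hG.2)
          rw [Finset.card_sdiff_of_subset (edgeFinset_mono hG.1),
            Finset.card_sdiff_of_subset (edgeFinset_mono hFH), ncard_edgeSet, ncard_edgeSet,
            ncard_edgeSet]
          congr 2
          omega
    _ = 1 := by rw [Finset.sum_pow_mul_eq_add_pow, add_sub_cancel, one_pow]

lemma ncard_edgeSet_le_choose_two [Fintype V] (G : SimpleGraph V) :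
    G.edgeSet.ncard ≤ (Fintype.card V).choose 2 := by
  classical
  rw [ncard_edgeSet]
  exact card_edgeFinset_le_card_choose_two

end SimpleGraph

open SimpleGraph

section RandomCluster

variable {m : ℕ} {p q : ℝ}

lemma rcW_nonneg (hp : 0 ≤ p) (hp1 : p ≤ 1) (hq : 0 ≤ q) (G : SimpleGraph (Fin m)) :
    0 ≤ rcW m p q G :=
  mul_nonneg (mul_nonneg (pow_nonneg hp _) (pow_nonneg (sub_nonneg.mpr hp1) _)) (pow_nonneg hq _)

lemma ncard_edgeSet_le_fin (G : SimpleGraph (Fin m)) : G.edgeSet.ncard ≤ m * (m - 1) / 2 := by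
  simpa [Nat.choose_two_right] using G.ncard_edgeSet_le_choose_two

lemma compSize_congr {F G : SimpleGraph (Fin m)} (h : G.Reachable = F.Reachable) :
    compSize G = compSize F := by
  funext v
  simp only [compSize, ConnectedComponent.supp, ConnectedComponent.eq, h]

lemma rcW_mul_pow_sub {F G : SimpleGraph (Fin m)} {c : ℕ} (hR : G.Reachable = F.Reachable)
    (hFG : F.edgeSet.ncard ≤ G.edgeSet.ncard) (hGc : G.edgeSet.ncard ≤ c)
    (hc : c ≤ m * (m - 1) / 2) :
    rcW m p q G * (1 - p) ^ (c - F.edgeSet.ncard) =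
      rcW m p q F * (p ^ (G.edgeSet.ncard - F.edgeSet.ncard) *
        (1 - p) ^ (c - G.edgeSet.ncard)) := by
  have hk : Nat.card G.ConnectedComponent = Nat.card F.ConnectedComponent := by
    simp only [ConnectedComponent, hR]
  have hp : p ^ G.edgeSet.ncard =
      p ^ F.edgeSet.ncard * p ^ (G.edgeSet.ncard - F.edgeSet.ncard) := by
    rw [← pow_add, Nat.add_sub_cancel' hFG]
  have h1p : (1 - p) ^ (m * (m - 1) / 2 - G.edgeSet.ncard) * (1 - p) ^ (c - F.edgeSet.ncard) =
      (1 - p) ^ (m * (m - 1) / 2 - F.edgeSet.ncard) * (1 - p) ^ (c - G.edgeSet.ncard) := by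
    rw [← pow_add, ← pow_add]
    congr 1
    omega
  simp only [rcW, hk, hp]
  linear_combination p ^ F.edgeSet.ncard * p ^ (G.edgeSet.ncard - F.edgeSet.ncard) *
    q ^ Nat.card F.ConnectedComponent * h1p

open Classical in
lemma sum_rcW_interval_componentCliques_mul (F : SimpleGraph (Fin m)) :
    (∑ G ∈ {G | F ≤ G ∧ G ≤ F.componentCliques}, rcW m p q G) *
      (1 - p) ^ (F.componentCliques.edgeSet.ncard - F.edgeSet.ncard) = rcW m p q F := by
  conv_rhs =>
    rw [← mul_one (rcW m p q F), ← sum_pow_mul_pow_interval_eq_one F.le_componentCliques p]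
  rw [Finset.sum_mul, Finset.mul_sum]
  refine Finset.sum_congr rfl fun G hG => ?_
  simp only [Finset.mem_filter, Finset.mem_univ, true_and] at hG
  exact rcW_mul_pow_sub (reachable_eq_of_le_of_le_componentCliques hG.1 hG.2)
    (Set.ncard_le_ncard (edgeSet_mono hG.1)) (Set.ncard_le_ncard (edgeSet_mono hG.2))
    (ncard_edgeSet_le_fin _)

lemma sum_rcW_le_of_reachable_eq {r : ℕ} (hp : 0 ≤ p) (hp1 : p < 1) (hq : 0 ≤ q)
    {F : SimpleGraph (Fin m)} (hF : ∀ v, compSize F v ≤ r) (s : Finset (SimpleGraph (Fin m)))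
    (hs : ∀ G ∈ s, F ≤ G ∧ G.Reachable = F.Reachable) :
    ∑ G ∈ s, rcW m p q G ≤ rcW m p q F * (1 - p) ^ (-(((r : ℝ) * m) / 2)) := by
  classical
  have h1p : 0 < 1 - p := sub_pos.mpr hp1
  set I : Finset (SimpleGraph (Fin m)) := {G | F ≤ G ∧ G ≤ F.componentCliques}
  have hsI : s ⊆ I := fun G hG => by
    simp only [I, Finset.mem_filter, Finset.mem_univ, true_and]
    exact ⟨(hs G hG).1, componentCliques_congr (hs G hG).2 ▸ G.le_componentCliques⟩
  have hedges : (F.componentCliques.edgeSet.ncard : ℝ) ≤ (r : ℝ) * m / 2 := by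
    have := two_mul_ncard_edgeSet_componentCliques_le hF
    rw [Fintype.card_fin] at this
    have : (2 * F.componentCliques.edgeSet.ncard : ℝ) ≤ m * r := by exact_mod_cast this
    linarith
  have hone : 1 ≤ (1 - p) ^ (F.componentCliques.edgeSet.ncard - F.edgeSet.ncard) *
      (1 - p) ^ (-(((r : ℝ) * m) / 2)) := by
    rw [← Real.rpow_natCast, ← Real.rpow_add h1p]
    refine Real.one_le_rpow_of_pos_of_le_one_of_nonpos h1p (by linarith) ?_
    have : ((F.componentCliques.edgeSet.ncard - F.edgeSet.ncard : ℕ) : ℝ) ≤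
        F.componentCliques.edgeSet.ncard := Nat.cast_le.mpr (Nat.sub_le _ _)
    linarith
  calc ∑ G ∈ s, rcW m p q G
      ≤ ∑ G ∈ I, rcW m p q G :=
        Finset.sum_le_sum_of_subset_of_nonneg hsI fun G _ _ => rcW_nonneg hp hp1.le hq G
    _ ≤ (∑ G ∈ I, rcW m p q G) *
        ((1 - p) ^ (F.componentCliques.edgeSet.ncard - F.edgeSet.ncard) *
          (1 - p) ^ (-(((r : ℝ) * m) / 2))) :=
        le_mul_of_one_le_right (Finset.sum_nonneg fun G _ => rcW_nonneg hp hp1.le hq G) hone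
    _ = rcW m p q F * (1 - p) ^ (-(((r : ℝ) * m) / 2)) := by
        rw [← mul_assoc, sum_rcW_interval_componentCliques_mul]

end RandomCluster

theorem stmt13_general (q lam : ℝ) (n r : ℕ) (hq : 0 < q)
    (hlam : 0 < lam) (hlamn : lam < n) :
    Zrc n lam q (Bev n r) ≤
      Zrc n lam q (Lev n) * (1 - lam / n) ^ (-(((r : ℝ) * n) / 2)) := by
  classical
  have hn : (0 : ℝ) < n := hlam.trans hlamn
  have hp : 0 ≤ lam / n := (div_pos hlam hn).le
  have hp1 : lam / n < 1 := (div_lt_one hn).mpr hlamn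
  choose Φ hΦle hΦacyclic hΦreach using
    fun G : SimpleGraph (Fin n) => G.exists_isAcyclic_reachable_eq_le
  set C := (1 - lam / n) ^ (-(((r : ℝ) * n) / 2))
  set B := (Bev n r).toFinset
  have hfiber (G₀ : SimpleGraph (Fin n)) (hG₀ : G₀ ∈ B) :
      ∑ G ∈ B with Φ G = Φ G₀, rcW n (lam / n) q G ≤ rcW n (lam / n) q (Φ G₀) * C := by
    have hB : ∀ v, compSize (Φ G₀) v ≤ r := fun v => by
      have := (Set.mem_toFinset.mp hG₀) v
      rw [compSize_congr (hΦreach G₀)]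
      exact_mod_cast this
    refine sum_rcW_le_of_reachable_eq hp hp1 hq.le hB _ fun G hG => ?_
    rw [← (Finset.mem_filter.mp hG).2]
    exact ⟨hΦle G, (hΦreach G).symm⟩
  simp only [Zrc, ZP, finsum_mem_eq_toFinset_sum]
  calc ∑ G ∈ B, rcW n (lam / n) q G
      = ∑ F ∈ B.image Φ, ∑ G ∈ B with Φ G = F, rcW n (lam / n) q G :=
        (Finset.sum_fiberwise_of_maps_to (fun G hG => Finset.mem_image_of_mem Φ hG) _).symm
    _ ≤ ∑ F ∈ B.image Φ, rcW n (lam / n) q F * C := Finset.sum_le_sum fun F hF => by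
        obtain ⟨G₀, hG₀, rfl⟩ := Finset.mem_image.mp hF
        exact hfiber G₀ hG₀
    _ ≤ ∑ F ∈ (Lev n).toFinset, rcW n (lam / n) q F * C := by
        refine Finset.sum_le_sum_of_subset_of_nonneg (fun F hF => ?_) fun F _ _ =>
          mul_nonneg (rcW_nonneg hp hp1.le hq.le F) (Real.rpow_nonneg (by linarith) _)
        obtain ⟨G₀, -, rfl⟩ := Finset.mem_image.mp hF
        exact Set.mem_toFinset.mpr (hΦacyclic G₀)
    _ = (∑ F ∈ (Lev n).toFinset, rcW n (lam / n) q F) * C := (Finset.sum_mul ..).symm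

/-- Fix `q > 0`, an integer `n ≥ 1`, `0 < λ < n`, and an integer
`r` with `1 ≤ r ≤ n`. Then `Z_{n,λ,q}[B_r] ≤ Z_{n,λ,q}[L] · (1 − λ/n)^{−rn/2}`. -/
theorem stmt13 (q lam : ℝ) (n r : ℕ) (hq : 0 < q) (hn : 1 ≤ n)
    (hlam : 0 < lam) (hlamn : lam < n) (hr : 1 ≤ r) (hrn : r ≤ n) :
    Zrc n lam q (Bev n r) ≤
      Zrc n lam q (Lev n) * (1 - lam / n) ^ (-(((r : ℝ) * n) / 2)) :=
  stmt13_general q lam n r hq hlam hlamn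
end
end

section
/- Fix q > 0, λ > 0 and ε > 0. If θ ∈ (0,1) satisfies the mean field equation e^{−λθ} = (1−θ)/(1+(q−1)θ), then there exists θ' ∈ (θ, 1) satisfying e^{−(λ+ε)θ'} = (1−θ')/(1+(q−1)θ'). Consequently, the largest solution in [0,1) of the mean field equation is strictly increasing in λ on the set of λ for which it is positive. -/
lemma stmt19_aux_iff (q μ θ : ℝ) (hθ : θ < 1) :
    Real.exp (-μ * θ) = (1 - θ) / (1 + (q - 1) * θ) ↔
    Real.exp (-μ * θ) * (1 + (q - 1) * θ) = 1 - θ := by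
  constructor
  · intro h
    have hd : 1 + (q - 1) * θ ≠ 0 := by
      intro h0
      rw [h0, div_zero] at h
      exact (Real.exp_pos _).ne' h
    rw [h, div_mul_cancel₀ _ hd]
  · intro h
    have hd : (0:ℝ) < 1 + (q - 1) * θ := by
      nlinarith [Real.exp_pos (-μ * θ)]
    rw [eq_div_iff hd.ne']
    exact h

lemma stmt19_first (q lam ε : ℝ) (hq : 0 < q) (hlam : 0 < lam) (hε : 0 < ε) :
    ∀ θ : ℝ, θ ∈ Set.Ioo (0:ℝ) 1 →
      Real.exp (-lam * θ) = (1 - θ) / (1 + (q - 1) * θ) →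
      ∃ θ' ∈ Set.Ioo θ 1,
        Real.exp (-(lam + ε) * θ') = (1 - θ') / (1 + (q - 1) * θ') := by
  intro θ hθ heq
  obtain ⟨hθ0, hθ1⟩ := hθ
  have heq' : Real.exp (-lam * θ) * (1 + (q - 1) * θ) = 1 - θ :=
    (stmt19_aux_iff q lam θ hθ1).mp heq
  set F : ℝ → ℝ := fun t => Real.exp (-(lam + ε) * t) * (1 + (q - 1) * t) - (1 - t) with hF
  have hcont : ContinuousOn F (Set.Icc θ 1) := by
    fun_prop
  have hd : (0:ℝ) < 1 + (q - 1) * θ := by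
    nlinarith [Real.exp_pos (-lam * θ)]
  have hFθ : F θ < 0 := by
    have hsplit : Real.exp (-(lam + ε) * θ) = Real.exp (-lam * θ) * Real.exp (-ε * θ) := by
      rw [← Real.exp_add]; ring_nf
    have hlt : Real.exp (-ε * θ) < 1 := by
      rw [Real.exp_lt_one_iff]
      nlinarith
    have hep := Real.exp_pos (-lam * θ)
    simp only [hF, hsplit]
    nlinarith
  have hF1 : 0 < F 1 := by
    have : F 1 = Real.exp (-(lam + ε)) * q := by
      simp only [hF]; ring_nf
    rw [this]
    positivity
  have h0 : (0:ℝ) ∈ Set.Ioo (F θ) (F 1) := ⟨hFθ, hF1⟩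
  have := intermediate_value_Ioo hθ1.le hcont h0
  obtain ⟨θ', hθ', hFθ'⟩ := this
  refine ⟨θ', hθ', ?_⟩
  rw [stmt19_aux_iff q (lam + ε) θ' hθ'.2]
  simp only [hF] at hFθ'
  linarith

/-- Fix `q > 0`, `λ > 0` and `ε > 0`. If `θ ∈ (0,1)` satisfies the
mean field equation `e^{−λθ} = (1−θ)/(1+(q−1)θ)`, then there exists `θ' ∈ (θ,1)`
satisfying `e^{−(λ+ε)θ'} = (1−θ')/(1+(q−1)θ')`. Consequently, the largest solution
`θ_max` in `[0,1)` is strictly increasing in `λ` where it is positive: if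
`θ_max(λ) > 0` then `θ_max(λ) < θ_max(λ+ε)`. -/
theorem stmt19 (q lam ε : ℝ) (hq : 0 < q) (hlam : 0 < lam) (hε : 0 < ε) :
    (∀ θ : ℝ, θ ∈ Set.Ioo (0:ℝ) 1 →
      Real.exp (-lam * θ) = (1 - θ) / (1 + (q - 1) * θ) →
      ∃ θ' ∈ Set.Ioo θ 1,
        Real.exp (-(lam + ε) * θ') = (1 - θ') / (1 + (q - 1) * θ')) ∧
    (0 < sSup {θ : ℝ | θ ∈ Set.Ico (0:ℝ) 1 ∧
        Real.exp (-lam * θ) = (1 - θ) / (1 + (q - 1) * θ)} →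
      sSup {θ : ℝ | θ ∈ Set.Ico (0:ℝ) 1 ∧
          Real.exp (-lam * θ) = (1 - θ) / (1 + (q - 1) * θ)} <
        sSup {θ : ℝ | θ ∈ Set.Ico (0:ℝ) 1 ∧
          Real.exp (-(lam + ε) * θ) = (1 - θ) / (1 + (q - 1) * θ)}) := by
  refine ⟨stmt19_first q lam ε hq hlam hε, ?_⟩
  intro hpos
  set S1 := {θ : ℝ | θ ∈ Set.Ico (0:ℝ) 1 ∧
    Real.exp (-lam * θ) = (1 - θ) / (1 + (q - 1) * θ)} with hS1
  set S2 := {θ : ℝ | θ ∈ Set.Ico (0:ℝ) 1 ∧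
    Real.exp (-(lam + ε) * θ) = (1 - θ) / (1 + (q - 1) * θ)} with hS2
  -- S1 equals a compact set
  have hSeq : S1 = {θ : ℝ | θ ∈ Set.Icc (0:ℝ) 1 ∧
      Real.exp (-lam * θ) * (1 + (q - 1) * θ) - (1 - θ) = 0} := by
    ext θ
    simp only [hS1, Set.mem_setOf_eq, Set.mem_Ico, Set.mem_Icc]
    constructor
    · rintro ⟨⟨h0, h1⟩, heq⟩
      refine ⟨⟨h0, h1.le⟩, ?_⟩
      have := (stmt19_aux_iff q lam θ h1).mp heq
      linarith
    · rintro ⟨⟨h0, h1⟩, heq⟩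
      have h1' : θ < 1 := by
        rcases lt_or_eq_of_le h1 with h | h
        · exact h
        · exfalso
          subst h
          have hep := Real.exp_pos (-lam * 1)
          nlinarith
      refine ⟨⟨h0, h1'⟩, (stmt19_aux_iff q lam θ h1').mpr (by linarith)⟩
  have hcompact : IsCompact S1 := by
    rw [hSeq]
    have : {θ : ℝ | θ ∈ Set.Icc (0:ℝ) 1 ∧
        Real.exp (-lam * θ) * (1 + (q - 1) * θ) - (1 - θ) = 0} =
        Set.Icc (0:ℝ) 1 ∩ {θ : ℝ | Real.exp (-lam * θ) * (1 + (q - 1) * θ) - (1 - θ) = 0} := by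
      ext θ; simp [Set.mem_inter_iff]
    rw [this]
    exact isCompact_Icc.inter_right (isClosed_eq (by fun_prop) continuous_const)
  have hne : S1.Nonempty := ⟨0, by norm_num [hS1]⟩
  have hmem : sSup S1 ∈ S1 := hcompact.sSup_mem hne
  obtain ⟨⟨h0, h1⟩, heq⟩ := hmem
  have hθpos : 0 < sSup S1 := hpos
  obtain ⟨θ', hθ', heq'⟩ := stmt19_first q lam ε hq hlam hε (sSup S1) ⟨hθpos, h1⟩ heq
  have hθ'S2 : θ' ∈ S2 := ⟨⟨le_of_lt (lt_trans hθpos hθ'.1), hθ'.2⟩, heq'⟩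
  have hbdd : BddAbove S2 := ⟨1, fun x hx => hx.1.2.le⟩
  calc sSup S1 < θ' := hθ'.1
    _ ≤ sSup S2 := le_csSup hbdd hθ'S2
end
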